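/- arXiv:2204.08643 — 2 statements merged into one kernel-verified Lean document; each statement's English description precedes it below -/
import Mathlib

section
/- Merge soundness (Theorem 1): Let A₁ and A₂ be two UAPDGs over the same free variables, abstracted as existentially quantified conjunctive formulas over labeled graphs, and let NM, EM be any node and edge alignment maps that respect free-variable labels (nodes carrying the same free variable are aligned) and edge labels, extended to NM^ε, EM^ε by pairing unmatched elements with ε. Let A = project_{A₁,A₂}(merge_{(NM^ε,EM^ε)}(A₁, A₂)) be the merged UAPDG restricted to pairs (n₁,n₂) with n₁ ∈ N₁ and n₂ ∈ N₂, where the annotation of (n₁,n₂) is the lattice join Lat₁(n₁) ⊔ Lat₂(n₂). Assuming lattice interpretations are sound for join (⟦a⟧ x ∨ ⟦b⟧ x → ⟦a ⊔ b⟧ x), prove that A₁ ∨ A₂ ⇒ A, i.e., any model of A₁ or of A₂ is a model of A. -/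
/-- Merge soundness (Theorem 1). UAPDGs `A₁`, `A₂` over the same free variables
`ι` are abstracted as existentially quantified conjunctive formulas over labeled
graphs: a model is an assignment `g` of nodes to elements of a world `W`
respecting the free-variable valuation `v`, realizing every edge atom, and
satisfying every lattice node annotation. For any alignment relation `R` that
respects free-variable labels, the projected merge — whose nodes are the aligned
pairs, whose edges are those aligned in both, and whose annotations are lattice
joins — is implied by `A₁ ∨ A₂`, assuming the lattice interpretation is sound for
joins. -/
theorem stmt_14 {W L E ι N₁ N₂ : Type*} [SemilatticeSup L]
    (edge : W → E → W → Prop) (sat : L → W → Prop)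
    (hjoin : ∀ (a b : L) (w : W), (sat a w ∨ sat b w) → sat (a ⊔ b) w)
    (edges₁ : N₁ → E → N₁ → Prop) (ann₁ : N₁ → L) (fv₁ : ι → N₁)
    (edges₂ : N₂ → E → N₂ → Prop) (ann₂ : N₂ → L) (fv₂ : ι → N₂)
    (R : N₁ → N₂ → Prop) (hR : ∀ i, R (fv₁ i) (fv₂ i))
    (v : ι → W)
    (hmodel :
      (∃ g₁ : N₁ → W, (∀ i, g₁ (fv₁ i) = v i) ∧
        (∀ p e q, edges₁ p e q → edge (g₁ p) e (g₁ q)) ∧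
        (∀ n, sat (ann₁ n) (g₁ n))) ∨
      (∃ g₂ : N₂ → W, (∀ i, g₂ (fv₂ i) = v i) ∧
        (∀ p e q, edges₂ p e q → edge (g₂ p) e (g₂ q)) ∧
        (∀ n, sat (ann₂ n) (g₂ n)))) :
    ∃ g : {p : N₁ × N₂ // R p.1 p.2} → W,
      (∀ i, g ⟨(fv₁ i, fv₂ i), hR i⟩ = v i) ∧
      (∀ (p q : {p : N₁ × N₂ // R p.1 p.2}) (e : E),
        edges₁ p.1.1 e q.1.1 → edges₂ p.1.2 e q.1.2 → edge (g p) e (g q)) ∧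
      (∀ p : {p : N₁ × N₂ // R p.1 p.2}, sat (ann₁ p.1.1 ⊔ ann₂ p.1.2) (g p)) := by
  rcases hmodel with ⟨g₁, hfv, hedge, hsat⟩ | ⟨g₂, hfv, hedge, hsat⟩
  · exact ⟨fun p => g₁ p.1.1, fun i => hfv i,
      fun p q e h1 _ => hedge _ _ _ h1,
      fun p => hjoin _ _ _ (Or.inl (hsat _))⟩
  · exact ⟨fun p => g₂ p.1.2, fun i => hfv i,
      fun p q e _ h2 => hedge _ _ _ h2,
      fun p => hjoin _ _ _ (Or.inr (hsat _))⟩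
end

section
/- In the restricted merge soundness lemma (Lemma 2 in the appendix), suppose A₁ and A₂ are UAPDGs over identical free variables x⃗ and bound variables y⃗, and NM, EM are total bijective alignment maps such that (n₁,n₂) ∈ NM implies n₁ and n₂ carry the same variable (free or bound). Let φ, φ₁, φ₂ be the conjunctive matrices of merge(A₁,A₂), A₁, A₂ respectively. Prove that every atomic conjunct of φ is a conjunct of φ₁ (up to the variable relabeling induced by NM) weakened by a lattice join, and conclude φ₁(x⃗,y⃗) → φ(x⃗,y⃗) pointwise, hence ∃y⃗ φ₁ → ∃y⃗ φ and symmetrically ∃y⃗ φ₂ → ∃y⃗ φ, giving A₁ ∨ A₂ ⇒ merge(A₁,A₂). -/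
/-- Restricted merge soundness (Lemma 2): UAPDGs `A₁`, `A₂` over identical free
variables `ι` and bound variables `κ`, with a total bijective variable-respecting
alignment (so nodes are identified with variables `ι ⊕ κ` and aligned edges
coincide, `hEM`). Every conjunct of the merge matrix `φ` (common edge atoms and
lattice-join node atoms) is weaker than the corresponding conjunct of each input
matrix, so `φ₁ → φ` and `φ₂ → φ` pointwise, hence `∃y⃗ φ₁ → ∃y⃗ φ`,
`∃y⃗ φ₂ → ∃y⃗ φ`, giving `A₁ ∨ A₂ ⇒ merge(A₁, A₂)`. -/
theorem stmt_18 {W L E ι κ : Type*} [SemilatticeSup L]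
    (edge : W → E → W → Prop) (sat : L → W → Prop)
    (hjoin : ∀ (a b : L) (w : W), (sat a w ∨ sat b w) → sat (a ⊔ b) w)
    (edges₁ edges₂ : (ι ⊕ κ) → E → (ι ⊕ κ) → Prop)
    (hEM : ∀ p e q, edges₁ p e q ↔ edges₂ p e q)
    (ann₁ ann₂ : (ι ⊕ κ) → L)
    (x : ι → W) :
    -- pointwise: the matrix of the merge is weaker than each input matrix
    (∀ g : (ι ⊕ κ) → W, (∀ i, g (Sum.inl i) = x i) →
      (((∀ p e q, edges₁ p e q → edge (g p) e (g q)) ∧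
          (∀ n, sat (ann₁ n) (g n))) →
        ((∀ p e q, edges₁ p e q ∧ edges₂ p e q → edge (g p) e (g q)) ∧
          (∀ n, sat (ann₁ n ⊔ ann₂ n) (g n))))) ∧
    (∀ g : (ι ⊕ κ) → W, (∀ i, g (Sum.inl i) = x i) →
      (((∀ p e q, edges₂ p e q → edge (g p) e (g q)) ∧
          (∀ n, sat (ann₂ n) (g n))) →
        ((∀ p e q, edges₁ p e q ∧ edges₂ p e q → edge (g p) e (g q)) ∧
          (∀ n, sat (ann₁ n ⊔ ann₂ n) (g n))))) ∧
    -- existential closure: A₁ ∨ A₂ ⇒ merge(A₁, A₂)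
    (((∃ g : (ι ⊕ κ) → W, (∀ i, g (Sum.inl i) = x i) ∧
        (∀ p e q, edges₁ p e q → edge (g p) e (g q)) ∧
        (∀ n, sat (ann₁ n) (g n))) ∨
      (∃ g : (ι ⊕ κ) → W, (∀ i, g (Sum.inl i) = x i) ∧
        (∀ p e q, edges₂ p e q → edge (g p) e (g q)) ∧
        (∀ n, sat (ann₂ n) (g n)))) →
      (∃ g : (ι ⊕ κ) → W, (∀ i, g (Sum.inl i) = x i) ∧
        (∀ p e q, edges₁ p e q ∧ edges₂ p e q → edge (g p) e (g q)) ∧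
        (∀ n, sat (ann₁ n ⊔ ann₂ n) (g n)))) := by
  refine ⟨fun g _ h => ⟨fun p e q hpq => h.1 p e q hpq.1, fun n => hjoin _ _ _ (Or.inl (h.2 n))⟩,
    fun g _ h => ⟨fun p e q hpq => h.1 p e q hpq.2, fun n => hjoin _ _ _ (Or.inr (h.2 n))⟩,
    fun h => ?_⟩
  rcases h with ⟨g, hg, h1, h2⟩ | ⟨g, hg, h1, h2⟩
  · exact ⟨g, hg, fun p e q hpq => h1 p e q hpq.1, fun n => hjoin _ _ _ (Or.inl (h2 n))⟩
  · exact ⟨g, hg, fun p e q hpq => h1 p e q hpq.2, fun n => hjoin _ _ _ (Or.inr (h2 n))⟩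
end
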